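/- Let N ≥ 1, let 1 ≤ q < 2, let Ω ⊆ ℝ^N be an open set and let w be a classical Lane–Emden solution on Ω with w(x) ≤ M for all x ∈ Ω, where M > 0. Let V : Ω → ℝ be measurable and satisfy −(1/4)·|∇w(x)/w(x)|² ≤ V(x) ≤ 0 for almost every x ∈ Ω. Then for every smooth function φ : ℝ^N → ℝ with compact support contained in Ω one has ∫_Ω |∇φ|² dx + ∫_Ω V φ² dx ≥ (1/2)·M^{q−2}·∫_Ω φ² dx. -/

import Mathlib

open MeasureTheory

/-- The Laplacian of a function on `ℝ^N`, computed as the sum of the second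
partial derivatives along the coordinate directions. -/
noncomputable def lap {N : ℕ} (f : EuclideanSpace ℝ (Fin N) → ℝ)
    (x : EuclideanSpace ℝ (Fin N)) : ℝ :=
  ∑ i : Fin N, fderiv ℝ (fun y => fderiv ℝ f y (EuclideanSpace.single i 1)) x
    (EuclideanSpace.single i 1)

/-- A classical Lane–Emden solution on an open set `Ω ⊆ ℝ^N`: twice continuously
differentiable on `Ω`, positive on `Ω`, and satisfying `-Δw = w^(q-1)` on `Ω`. -/
def IsLaneEmdenSolution {N : ℕ} (q : ℝ) (Ω : Set (EuclideanSpace ℝ (Fin N)))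
    (w : EuclideanSpace ℝ (Fin N) → ℝ) : Prop :=
  ContDiffOn ℝ 2 w Ω ∧ (∀ x ∈ Ω, 0 < w x) ∧ ∀ x ∈ Ω, -lap w x = w x ^ (q - 1)


/-!
Ground state substitution. For `w > 0` the vector field `F = φ² ∇w / (2w)` satisfies
`div F = |∇φ|² - |∇w/w|² φ² / 4 + φ² Δw / (2w) - |∇φ - φ ∇w / (2w)|²`.
If `φ` has compact support in `Ω`, then `∫ div F = 0`, and the Lane–Emden equation
`Δw / w = -w^(q-2)` gives `∫ |∇φ|² ≥ ∫ |∇w/w|² φ² / 4 + ½ ∫ w^(q-2) φ²`.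
The lower bound on `V` absorbs the first term on the right, and `w^(q-2) ≥ M^(q-2)`
because `w ≤ M` and `q < 2`.
-/

open Set Function
open scoped Gradient RealInnerProductSpace

theorem ContDiffOn.contDiff_of_tsupport_subset {𝕜 E F : Type*} [NontriviallyNormedField 𝕜]
    [NormedAddCommGroup E] [NormedSpace 𝕜 E] [NormedAddCommGroup F] [NormedSpace 𝕜 F]
    {n : WithTop ℕ∞} {f : E → F} {Ω : Set E} (hf : ContDiffOn 𝕜 n f Ω) (hΩ : IsOpen Ω)
    (hfΩ : tsupport f ⊆ Ω) : ContDiff 𝕜 n f :=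
  contDiff_of_contDiffOn_union_of_isOpen (t := (tsupport f)ᶜ) hf
    (contDiffOn_const.congr fun _ hx => image_eq_zero_of_notMem_tsupport hx)
    (by rw [union_comm, ← compl_subset_iff_union, compl_compl]; exact hfΩ) hΩ
    (isClosed_tsupport f).isOpen_compl

theorem integrableOn_mul_sq_of_abs_le {α : Type*} [TopologicalSpace α] [MeasurableSpace α]
    [OpensMeasurableSpace α] {μ : Measure α} [IsFiniteMeasureOnCompacts μ] {Ω : Set α}
    (hΩ : IsOpen Ω) {f g V : α → ℝ} (hg : ContinuousOn g Ω)
    (hV : AEStronglyMeasurable V (μ.restrict Ω)) (hVg : ∀ᵐ x ∂μ.restrict Ω, |V x| ≤ g x)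
    (hf : Continuous f) (hfc : HasCompactSupport f) (hfΩ : tsupport f ⊆ Ω) :
    IntegrableOn (fun x => V x * f x ^ 2) Ω μ := by
  have hsupport : support (fun x => g x * f x ^ 2) ⊆ support f :=
    support_subset_iff'.2 fun x hx => by simp [notMem_support.1 hx]
  have hbound : Integrable (fun x => g x * f x ^ 2) μ :=
    ((hg.mul (hf.pow 2).continuousOn).continuous_of_tsupport_subset hΩ
      ((closure_mono hsupport).trans hfΩ)).integrable_of_hasCompactSupport (hfc.mono hsupport)
  refine hbound.integrableOn.mono' (hV.mul (hf.pow 2).aestronglyMeasurable) ?_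
  filter_upwards [hVg] with x hx
  rw [norm_mul, norm_pow, Real.norm_eq_abs, Real.norm_eq_abs, sq_abs]
  exact mul_le_mul_of_nonneg_right hx (sq_nonneg _)

section CompactSupport

variable {E : Type*} [NormedAddCommGroup E] [NormedSpace ℝ E] [MeasurableSpace E] [BorelSpace E]
  {μ : Measure E} {f : E → ℝ}

theorem HasCompactSupport.integrable_fderiv_apply [IsFiniteMeasureOnCompacts μ]
    (hfc : HasCompactSupport f) (hf : ContDiff ℝ 1 f) (v : E) :
    Integrable (fun x => fderiv ℝ f x v) μ :=
  ((hf.continuous_fderiv one_ne_zero).clm_apply continuous_const).integrable_of_hasCompactSupport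
    (hfc.fderiv_apply ℝ v)

theorem HasCompactSupport.integral_fderiv_apply_eq_zero [FiniteDimensional ℝ E]
    [μ.IsAddHaarMeasure] (hfc : HasCompactSupport f) (hf : ContDiff ℝ 1 f) (v : E) :
    ∫ x, fderiv ℝ f x v ∂μ = 0 := by
  simpa using integral_mul_fderiv_eq_neg_fderiv_mul_of_integrable (μ := μ)
    (f := fun _ => (1 : ℝ)) (g := f) (v := v) (by simp)
    (by simpa using hfc.integrable_fderiv_apply hf v)
    (by simpa using hf.continuous.integrable_of_hasCompactSupport hfc)
    (fun x _ => differentiableAt_const 1) (fun x _ => hf.differentiable one_ne_zero x)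

end CompactSupport

section Gradient

variable {F : Type*} [NormedAddCommGroup F] [InnerProductSpace ℝ F] [CompleteSpace F]
  {f : F → ℝ}

theorem norm_gradient_eq_norm_fderiv (f : F → ℝ) (x : F) :
    ‖∇ f x‖ = ‖fderiv ℝ f x‖ :=
  (InnerProductSpace.toDual ℝ F).symm.norm_map _

theorem ContDiffOn.continuousOn_norm_gradient {Ω : Set F} (hf : ContDiffOn ℝ 1 f Ω)
    (hΩ : IsOpen Ω) : ContinuousOn (fun x => ‖∇ f x‖) Ω := by
  simpa only [norm_gradient_eq_norm_fderiv] using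
    (hf.continuousOn_fderiv_of_isOpen hΩ le_rfl).norm

theorem HasCompactSupport.integrable_norm_gradient_sq [MeasurableSpace F] [BorelSpace F]
    {μ : Measure F} [IsFiniteMeasureOnCompacts μ] (hfc : HasCompactSupport f)
    (hf : ContDiff ℝ 1 f) : Integrable (fun x => ‖∇ f x‖ ^ 2) μ := by
  have hsupport : support (fun x => ‖∇ f x‖ ^ 2) ⊆ tsupport f := fun x hx => by
    by_contra h
    simp [norm_gradient_eq_norm_fderiv, fderiv_of_notMem_tsupport ℝ h] at hx
  refine Continuous.integrable_of_hasCompactSupport ?_ (hfc.mono' hsupport)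
  simp only [norm_gradient_eq_norm_fderiv]
  exact (hf.continuous_fderiv one_ne_zero).norm.pow 2

theorem integrableOn_mul_sq_of_neg_le [MeasurableSpace F] [BorelSpace F] {μ : Measure F}
    [IsFiniteMeasureOnCompacts μ] {Ω : Set F} (hΩ : IsOpen Ω) {w : F → ℝ}
    (hw : ContDiffOn ℝ 1 w Ω) (hw0 : ∀ x ∈ Ω, w x ≠ 0) {V : F → ℝ}
    (hV : AEStronglyMeasurable V (μ.restrict Ω))
    (hVw : ∀ᵐ x ∂μ.restrict Ω, -(1 / 4) * (‖∇ w x‖ / w x) ^ 2 ≤ V x ∧ V x ≤ 0)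
    (hf : Continuous f) (hfc : HasCompactSupport f) (hfΩ : tsupport f ⊆ Ω) :
    IntegrableOn (fun x => V x * f x ^ 2) Ω μ := by
  refine integrableOn_mul_sq_of_abs_le hΩ (g := fun x => (1 / 4) * (‖∇ w x‖ / w x) ^ 2)
    (continuousOn_const.mul (((hw.continuousOn_norm_gradient hΩ).div hw.continuousOn hw0).pow 2))
    hV ?_ hf hfc hfΩ
  filter_upwards [hVw] with x ⟨hVlower, hVupper⟩
  exact abs_le.2 ⟨by linarith, by linarith [sq_nonneg (‖∇ w x‖ / w x)]⟩

theorem hasGradientAt_sq_div {φ w : F → ℝ} {x : F} (hφ : DifferentiableAt ℝ φ x)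
    (hw : DifferentiableAt ℝ w x) (hwx : w x ≠ 0) :
    HasGradientAt (fun y => φ y ^ 2 / (2 * w y))
      ((φ x / w x) • ∇ φ x - (φ x ^ 2 / (2 * w x ^ 2)) • ∇ w x) x := by
  rw [hasGradientAt_iff_hasFDerivAt]
  have h := ((hφ.hasFDerivAt.pow 2).mul
    ((hasDerivAt_inv hwx).comp_hasFDerivAt x hw.hasFDerivAt)).const_mul (1 / 2 : ℝ)
  refine (h.congr_of_eventuallyEq (.of_forall fun y => ?_)).congr_fderiv ?_
  · simp only [Pi.mul_apply, comp_apply]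
    ring
  · ext v
    simp only [one_div, neg_smul, smul_neg, comp_apply, Nat.add_one_sub_one, pow_one,
      nsmul_eq_mul, Nat.cast_ofNat, smul_add, add_apply, neg_apply, smul_apply, smul_eq_mul,
      map_sub, map_smul, toDual_gradient, sub_apply]
    field_simp
    ring

end Gradient

section Euclidean

variable {N : ℕ}

local notation "ℝⁿ" => EuclideanSpace ℝ (Fin N)

/-- A vector field on `ℝⁿ` is given by its components, as in the definition of `lap`. -/
noncomputable def divergence (F : Fin N → ℝⁿ → ℝ) (x : ℝⁿ) : ℝ :=
  ∑ i, fderiv ℝ (F i) x (EuclideanSpace.single i 1)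

theorem gradient_apply_eq_fderiv_single (f : ℝⁿ → ℝ) (x : ℝⁿ) (i : Fin N) :
    ∇ f x i = fderiv ℝ f x (EuclideanSpace.single i 1) := by
  rw [← inner_gradient_left, EuclideanSpace.inner_single_right]
  simp

theorem divergence_mul_fderiv {ψ w : ℝⁿ → ℝ} {x : ℝⁿ} (hψ : DifferentiableAt ℝ ψ x)
    (hw : DifferentiableAt ℝ (fderiv ℝ w) x) :
    divergence (fun i y => ψ y * fderiv ℝ w y (EuclideanSpace.single i 1)) x
      = ⟪∇ ψ x, ∇ w x⟫ + ψ x * lap w x := by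
  simp only [divergence, lap, PiLp.inner_apply, gradient_apply_eq_fderiv_single, Finset.mul_sum,
    ← Finset.sum_add_distrib]
  refine Finset.sum_congr rfl fun i _ => ?_
  rw [fderiv_fun_mul hψ (hw.clm_apply (differentiableAt_const _))]
  simp only [fderiv_clm_apply hw (differentiableAt_const _), fderiv_fun_const, Pi.zero_apply,
    ContinuousLinearMap.comp_zero, zero_add, add_apply, smul_apply,
    ContinuousLinearMap.flip_apply, smul_eq_mul, RCLike.inner_apply, Real.ringHom_apply]
  ring

noncomputable def groundStateField (φ w : ℝⁿ → ℝ) : Fin N → ℝⁿ → ℝ :=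
  fun i y => φ y ^ 2 / (2 * w y) * fderiv ℝ w y (EuclideanSpace.single i 1)

theorem divergence_groundStateField {φ w : ℝⁿ → ℝ} {x : ℝⁿ} (hφ : DifferentiableAt ℝ φ x)
    (hw : DifferentiableAt ℝ w x) (hw' : DifferentiableAt ℝ (fderiv ℝ w) x) (hwx : w x ≠ 0) :
    divergence (groundStateField φ w) x
      = ‖∇ φ x‖ ^ 2 - (1 / 4) * (‖∇ w x‖ / w x) ^ 2 * φ x ^ 2
        + φ x ^ 2 / (2 * w x) * lap w x - ‖∇ φ x - (φ x / (2 * w x)) • ∇ w x‖ ^ 2 := by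
  unfold groundStateField
  rw [divergence_mul_fderiv (hasGradientAt_sq_div hφ hw hwx).differentiableAt hw',
    (hasGradientAt_sq_div hφ hw hwx).gradient, norm_sub_sq_real]
  simp only [inner_sub_left, real_inner_smul_right, real_inner_self_eq_norm_sq, norm_smul,
    Real.norm_eq_abs, mul_pow, sq_abs, real_inner_comm]
  field_simp
  ring

theorem support_groundStateField_subset (φ w : ℝⁿ → ℝ) (i : Fin N) :
    support (groundStateField φ w i) ⊆ support φ :=
  support_subset_iff'.2 fun y hy => by simp [groundStateField, notMem_support.1 hy]

theorem HasCompactSupport.groundStateField {φ : ℝⁿ → ℝ} (hφc : HasCompactSupport φ)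
    (w : ℝⁿ → ℝ) (i : Fin N) : HasCompactSupport (groundStateField φ w i) :=
  hφc.mono (support_groundStateField_subset φ w i)

theorem contDiff_groundStateField {Ω : Set ℝⁿ} (hΩ : IsOpen Ω) {w : ℝⁿ → ℝ}
    (hw : ContDiffOn ℝ 2 w Ω) (hw0 : ∀ x ∈ Ω, w x ≠ 0) {φ : ℝⁿ → ℝ} (hφ : ContDiff ℝ 1 φ)
    (hφΩ : tsupport φ ⊆ Ω) (i : Fin N) : ContDiff ℝ 1 (groundStateField φ w i) := by
  refine ContDiffOn.contDiff_of_tsupport_subset ?_ hΩ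
    ((closure_mono (support_groundStateField_subset φ w i)).trans hφΩ)
  exact ((hφ.contDiffOn.pow 2).div (contDiffOn_const.mul (hw.of_le one_le_two))
    fun x hx => mul_ne_zero two_ne_zero (hw0 x hx)).mul
    ((hw.fderiv_of_isOpen hΩ (by norm_num)).clm_apply contDiffOn_const)

theorem integrable_divergence {F : Fin N → ℝⁿ → ℝ} (hF : ∀ i, ContDiff ℝ 1 (F i))
    (hFc : ∀ i, HasCompactSupport (F i)) : Integrable (divergence F) :=
  integrable_finsetSum _ fun i _ => (hFc i).integrable_fderiv_apply (hF i) _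

theorem integral_divergence_eq_zero {F : Fin N → ℝⁿ → ℝ} (hF : ∀ i, ContDiff ℝ 1 (F i))
    (hFc : ∀ i, HasCompactSupport (F i)) : ∫ x, divergence F x = 0 := by
  unfold divergence
  rw [integral_finsetSum _ fun i _ => (hFc i).integrable_fderiv_apply (hF i) _]
  exact Finset.sum_eq_zero fun i _ => (hFc i).integral_fderiv_apply_eq_zero (hF i) _

theorem setIntegral_divergence_groundStateField {Ω : Set ℝⁿ} (hΩ : IsOpen Ω) {w : ℝⁿ → ℝ}
    (hw : ContDiffOn ℝ 2 w Ω) (hw0 : ∀ x ∈ Ω, w x ≠ 0) {φ : ℝⁿ → ℝ} (hφ : ContDiff ℝ 1 φ)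
    (hφc : HasCompactSupport φ) (hφΩ : tsupport φ ⊆ Ω) :
    ∫ x in Ω, divergence (groundStateField φ w) x = 0 := by
  have htsupport i : tsupport (groundStateField φ w i) ⊆ Ω :=
    (closure_mono (support_groundStateField_subset φ w i)).trans hφΩ
  rw [setIntegral_eq_integral_of_forall_compl_eq_zero fun x hx => Finset.sum_eq_zero fun i _ => by
    rw [fderiv_of_notMem_tsupport ℝ fun h => hx (htsupport i h), zero_apply]]
  exact integral_divergence_eq_zero (contDiff_groundStateField hΩ hw hw0 hφ hφΩ)
    (hφc.groundStateField w)

theorem IsLaneEmdenSolution.divergence_groundStateField_le {q : ℝ} {Ω : Set ℝⁿ}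
    (hΩ : IsOpen Ω) {w : ℝⁿ → ℝ} (hw : IsLaneEmdenSolution q Ω w) {φ : ℝⁿ → ℝ}
    (hφ : Differentiable ℝ φ) {x : ℝⁿ} (hx : x ∈ Ω) :
    divergence (groundStateField φ w) x
      ≤ ‖∇ φ x‖ ^ 2 - (1 / 4) * (‖∇ w x‖ / w x) ^ 2 * φ x ^ 2
        - (1 / 2) * w x ^ (q - 2) * φ x ^ 2 := by
  obtain ⟨hw2, hwpos, hwlap⟩ := hw
  have hΩx := hΩ.mem_nhds hx
  have hwx := (hwpos x hx).ne'
  rw [divergence_groundStateField (hφ x)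
    ((hw2.differentiableOn two_ne_zero x hx).differentiableAt hΩx)
    (((hw2.fderiv_of_isOpen hΩ (m := 1) (by norm_num)).differentiableOn one_ne_zero x
      hx).differentiableAt hΩx) hwx]
  have hlap : φ x ^ 2 / (2 * w x) * lap w x = -(1 / 2) * w x ^ (q - 2) * φ x ^ 2 := by
    rw [show lap w x = -w x ^ (q - 1) by linarith [hwlap x hx], show q - 1 = q - 2 + 1 by ring,
      Real.rpow_add_one hwx]
    field_simp
  linarith [sq_nonneg ‖∇ φ x - (φ x / (2 * w x)) • ∇ w x‖]

end Euclidean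

theorem ground_state_lower_bound_general {N : ℕ}
    {q : ℝ} (hq2 : q < 2)
    {Ω : Set (EuclideanSpace ℝ (Fin N))} (hΩ : IsOpen Ω)
    {w : EuclideanSpace ℝ (Fin N) → ℝ} (hw : IsLaneEmdenSolution q Ω w)
    {M : ℝ} (hwM : ∀ x ∈ Ω, w x ≤ M)
    {V : EuclideanSpace ℝ (Fin N) → ℝ} (hVmeas : Measurable V)
    (hV : ∀ᵐ x ∂(volume.restrict Ω),
      -(1 / 4) * (‖gradient w x‖ / w x) ^ 2 ≤ V x ∧ V x ≤ 0)
    (φ : EuclideanSpace ℝ (Fin N) → ℝ) (hφ : ContDiff ℝ (⊤ : ℕ∞) φ)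
    (hφc : HasCompactSupport φ) (hφΩ : tsupport φ ⊆ Ω) :
    (1 / 2) * M ^ (q - 2) * (∫ x in Ω, (φ x) ^ 2)
      ≤ (∫ x in Ω, ‖gradient φ x‖ ^ 2) + ∫ x in Ω, V x * (φ x) ^ 2 := by
  have hφ1 : ContDiff ℝ 1 φ := hφ.of_le (by exact_mod_cast le_top)
  have hw0 x (hx : x ∈ Ω) : w x ≠ 0 := (hw.2.1 x hx).ne'
  have hpointwise : ∀ᵐ x ∂volume.restrict Ω,
      (1 / 2) * M ^ (q - 2) * φ x ^ 2 + divergence (groundStateField φ w) x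
        ≤ ‖∇ φ x‖ ^ 2 + V x * φ x ^ 2 := by
    filter_upwards [hV, ae_restrict_mem hΩ.measurableSet] with x ⟨hVx, _⟩ hx
    have hMw : M ^ (q - 2) ≤ w x ^ (q - 2) :=
      Real.rpow_le_rpow_of_nonpos (hw.2.1 x hx) (hwM x hx) (by linarith)
    linarith [hw.divergence_groundStateField_le hΩ (hφ1.differentiable one_ne_zero) hx,
      mul_le_mul_of_nonneg_right hVx (sq_nonneg (φ x)),
      mul_le_mul_of_nonneg_right hMw (sq_nonneg (φ x))]
  have hφ2 : IntegrableOn (fun x => (1 / 2) * M ^ (q - 2) * φ x ^ 2) Ω :=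
    ((hφ1.continuous.pow 2).integrable_of_hasCompactSupport
      (hφc.mono fun x hx => by simpa using hx)).integrableOn.const_mul _
  have hdiv : IntegrableOn (divergence (groundStateField φ w)) Ω :=
    (integrable_divergence (contDiff_groundStateField hΩ hw.1 hw0 hφ1 hφΩ)
      (hφc.groundStateField w)).integrableOn
  have hgrad : IntegrableOn (fun x => ‖∇ φ x‖ ^ 2) Ω :=
    (hφc.integrable_norm_gradient_sq hφ1).integrableOn
  have hVφ := integrableOn_mul_sq_of_neg_le hΩ (hw.1.of_le one_le_two) hw0
    hVmeas.aestronglyMeasurable hV hφ1.continuous hφc hφΩ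
  calc (1 / 2) * M ^ (q - 2) * ∫ x in Ω, φ x ^ 2
      = ∫ x in Ω, ((1 / 2) * M ^ (q - 2) * φ x ^ 2 + divergence (groundStateField φ w) x) := by
        rw [integral_add hφ2 hdiv, integral_const_mul,
          setIntegral_divergence_groundStateField hΩ hw.1 hw0 hφ1 hφc hφΩ, add_zero]
    _ ≤ ∫ x in Ω, (‖∇ φ x‖ ^ 2 + V x * φ x ^ 2) :=
        integral_mono_ae (hφ2.fun_add hdiv) (hgrad.fun_add hVφ) hpointwise
    _ = _ := integral_add hgrad hVφ

/-- **Lower bound for the ground state energy** of the Schrödinger operator `-Δ + V`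
when `0 ≥ V ≥ -(1/4)|∇w/w|²` for a bounded Lane–Emden solution `w ≤ M`. -/
theorem ground_state_lower_bound {N : ℕ} (hN : 1 ≤ N)
    {q : ℝ} (hq1 : 1 ≤ q) (hq2 : q < 2)
    {Ω : Set (EuclideanSpace ℝ (Fin N))} (hΩ : IsOpen Ω)
    {w : EuclideanSpace ℝ (Fin N) → ℝ} (hw : IsLaneEmdenSolution q Ω w)
    {M : ℝ} (hM : 0 < M) (hwM : ∀ x ∈ Ω, w x ≤ M)
    {V : EuclideanSpace ℝ (Fin N) → ℝ} (hVmeas : Measurable V)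
    (hV : ∀ᵐ x ∂(volume.restrict Ω),
      -(1 / 4) * (‖gradient w x‖ / w x) ^ 2 ≤ V x ∧ V x ≤ 0)
    (φ : EuclideanSpace ℝ (Fin N) → ℝ) (hφ : ContDiff ℝ (⊤ : ℕ∞) φ)
    (hφc : HasCompactSupport φ) (hφΩ : tsupport φ ⊆ Ω) :
    (1 / 2) * M ^ (q - 2) * (∫ x in Ω, (φ x) ^ 2)
      ≤ (∫ x in Ω, ‖gradient φ x‖ ^ 2) + ∫ x in Ω, V x * (φ x) ^ 2 :=
  ground_state_lower_bound_general hq2 hΩ hw hwM hVmeas hV φ hφ hφc hφΩ
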